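/- arXiv:2306.03288 — 7 statements merged into one kernel-verified Lean document; each statement's English description precedes it below -/
import Mathlib

section
/- Let K ≥ 1 and let A, F ∈ ℝ^{K×K} be entrywise nonnegative matrices each of whose columns sums to 1. Let 0 ≤ κ < 1/(K+1) and suppose that 1 − κ ≤ (A·F)(k,k) ≤ 1 + κ for every k ∈ {1,…,K}, and (A·F)(k,j) ≤ κ for every k ≠ j. Then there exists a permutation σ of {1,…,K} such that for every k, A(k,σ(k)) = max_{ℓ} A(k,ℓ) and F(σ(k),k) = max_{q} F(q,k). -/
open Matrix BigOperators

theorem stmt0 {K : ℕ} (hK : 1 ≤ K) (A F : Matrix (Fin K) (Fin K) ℝ)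
    (hA0 : ∀ i j, 0 ≤ A i j) (hF0 : ∀ i j, 0 ≤ F i j)
    (hA1 : ∀ j, ∑ i, A i j = 1) (hF1 : ∀ j, ∑ i, F i j = 1)
    (κ : ℝ) (hκ0 : 0 ≤ κ) (hκ : κ < 1 / (K + 1))
    (hdiag : ∀ k, 1 - κ ≤ (A * F) k k ∧ (A * F) k k ≤ 1 + κ)
    (hoff : ∀ k j, k ≠ j → (A * F) k j ≤ κ) :
    ∃ σ : Equiv.Perm (Fin K), ∀ k,
      (∀ ℓ, A k ℓ ≤ A k (σ k)) ∧ (∀ q, F q k ≤ F (σ k) k) := by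
  have hKpos : (0:ℝ) < K + 1 := by positivity
  have hκhalf : κ < 1/2 := by
    refine lt_of_lt_of_le hκ ?_
    rw [div_le_div_iff₀ hKpos (by norm_num)]
    have : (1:ℝ) ≤ K := by exact_mod_cast hK
    linarith
  have h1κ : (0:ℝ) < 1 - κ := by linarith
  -- choose argmax of each row of A
  have hex : ∀ k : Fin K, ∃ ℓ : Fin K, ∀ ℓ', A k ℓ' ≤ A k ℓ := by
    intro k
    obtain ⟨b, _, hb⟩ := Finset.exists_max_image Finset.univ (A k)
      ⟨⟨0, hK⟩, Finset.mem_univ _⟩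
    exact ⟨b, fun ℓ' => hb ℓ' (Finset.mem_univ _)⟩
  choose g hg using hex
  -- A k (g k) ≥ 1 - κ
  have hg1 : ∀ k, 1 - κ ≤ A k (g k) := by
    intro k
    have h1 : (A * F) k k ≤ A k (g k) := by
      calc (A * F) k k = ∑ ℓ, A k ℓ * F ℓ k := rfl
        _ ≤ ∑ ℓ, A k (g k) * F ℓ k := by
            refine Finset.sum_le_sum fun ℓ _ => ?_
            exact mul_le_mul_of_nonneg_right (hg k ℓ) (hF0 ℓ k)
        _ = A k (g k) * ∑ ℓ, F ℓ k := by rw [Finset.mul_sum]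
        _ = A k (g k) := by rw [hF1 k, mul_one]
    exact le_trans (hdiag k).1 h1
  -- injectivity of g
  have hinj : Function.Injective g := by
    intro k k' h
    by_contra hne
    have hsum : A k (g k) + A k' (g k) ≤ 1 := by
      have hsub : ({k, k'} : Finset (Fin K)) ⊆ Finset.univ := Finset.subset_univ _
      have := Finset.sum_le_sum_of_subset_of_nonneg hsub
        (fun i _ _ => hA0 i (g k))
      rw [Finset.sum_pair hne, hA1 (g k)] at this
      exact this
    have h1 := hg1 k
    have h2 := hg1 k'
    rw [← h] at h2
    linarith
  have hbij : Function.Bijective g := (Finite.injective_iff_bijective).mp hinj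
  refine ⟨Equiv.ofBijective g hbij, fun k => ⟨hg k, ?_⟩⟩
  simp only [Equiv.ofBijective_apply]
  -- F small off the image point
  have hsmall : ∀ q, q ≠ g k → F q k ≤ κ / (1 - κ) := by
    intro q hq
    obtain ⟨k', rfl⟩ := hbij.2 q
    have hk'k : k' ≠ k := fun h => hq (by rw [h])
    have h1 : (1 - κ) * F (g k') k ≤ A k' (g k') * F (g k') k :=
      mul_le_mul_of_nonneg_right (hg1 k') (hF0 _ _)
    have h2 : A k' (g k') * F (g k') k ≤ (A * F) k' k := by
      have : (A * F) k' k = ∑ ℓ, A k' ℓ * F ℓ k := rfl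
      rw [this]
      exact Finset.single_le_sum
        (fun ℓ _ => mul_nonneg (hA0 k' ℓ) (hF0 ℓ k)) (Finset.mem_univ (g k'))
    have h3 : (A * F) k' k ≤ κ := hoff k' k hk'k
    rw [le_div_iff₀ h1κ, mul_comm]
    linarith
  -- F (g k) k is large
  have hbig : 1 - (K - 1 : ℝ) * (κ / (1 - κ)) ≤ F (g k) k := by
    have hsplit : F (g k) k + ∑ q ∈ Finset.univ.erase (g k), F q k = 1 := by
      rw [← hF1 k, Finset.add_sum_erase _ (fun q => F q k) (Finset.mem_univ (g k))]
    have hrest : ∑ q ∈ Finset.univ.erase (g k), F q k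
        ≤ (K - 1 : ℝ) * (κ / (1 - κ)) := by
      have hcard : (Finset.univ.erase (g k)).card = K - 1 := by
        rw [Finset.card_erase_of_mem (Finset.mem_univ _), Finset.card_univ,
          Fintype.card_fin]
      calc ∑ q ∈ Finset.univ.erase (g k), F q k
          ≤ ∑ _q ∈ Finset.univ.erase (g k), (κ / (1 - κ)) := by
            refine Finset.sum_le_sum fun q hq => ?_
            exact hsmall q (Finset.ne_of_mem_erase hq)
        _ = ((K - 1 : ℕ) : ℝ) * (κ / (1 - κ)) := by
            rw [Finset.sum_const, hcard, nsmul_eq_mul]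
        _ = (K - 1 : ℝ) * (κ / (1 - κ)) := by
            rw [Nat.cast_sub hK, Nat.cast_one]
    linarith
  -- conclude
  intro q
  by_cases hq : q = g k
  · rw [hq]
  · refine le_trans (hsmall q hq) (le_trans ?_ hbig)
    have hKκ : (K + 1 : ℝ) * κ < 1 := by
      rw [← lt_div_iff₀' hKpos]; exact hκ
    have key : (K : ℝ) * (κ / (1 - κ)) ≤ 1 := by
      have h2 : (K:ℝ) * κ ≤ 1 - κ := by linarith
      calc (K:ℝ) * (κ / (1 - κ)) = (K * κ) / (1 - κ) := by ring
        _ ≤ (1 - κ) / (1 - κ) := by gcongr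
        _ = 1 := div_self h1κ.ne'
    nlinarith [key]
end

section
/- Let K ≥ 1 and let A, F ∈ ℝ^{K×K} be entrywise nonnegative matrices each of whose columns sums to 1. Let 0 ≤ κ < 1/(K+1) and suppose that (A·F)(k,k) ≥ 1 − κ for every k ∈ {1,…,K}, and (A·F)(k,j) ≤ κ for every k ≠ j. Then for any k ≠ j, any index ℓ* with A(k,ℓ*) = max_{ℓ} A(k,ℓ) and any index q* with F(q*,j) = max_{q} F(q,j) satisfy ℓ* ≠ q*. -/
open Matrix BigOperators

theorem stmt1 {K : ℕ} (hK : 1 ≤ K) (A F : Matrix (Fin K) (Fin K) ℝ)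
    (hA0 : ∀ i j, 0 ≤ A i j) (hF0 : ∀ i j, 0 ≤ F i j)
    (hA1 : ∀ j, ∑ i, A i j = 1) (hF1 : ∀ j, ∑ i, F i j = 1)
    (κ : ℝ) (hκ0 : 0 ≤ κ) (hκ : κ < 1 / (K + 1))
    (hdiag : ∀ k, 1 - κ ≤ (A * F) k k)
    (hoff : ∀ k j, k ≠ j → (A * F) k j ≤ κ) :
    ∀ k j, k ≠ j → ∀ ℓstar qstar : Fin K,
      (∀ ℓ, A k ℓ ≤ A k ℓstar) → (∀ q, F q j ≤ F qstar j) → ℓstar ≠ qstar := by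
  intro k j hkj ℓstar qstar hℓ hq heq
  subst heq
  -- A k ℓstar ≥ 1 - κ
  have hAle : (A * F) k k ≤ A k ℓstar := by
    rw [Matrix.mul_apply]
    calc ∑ ℓ, A k ℓ * F ℓ k ≤ ∑ ℓ, A k ℓstar * F ℓ k := by
          apply Finset.sum_le_sum
          intro i _
          exact mul_le_mul_of_nonneg_right (hℓ i) (hF0 i k)
      _ = A k ℓstar * ∑ ℓ, F ℓ k := by rw [Finset.mul_sum]
      _ = A k ℓstar := by rw [hF1 k, mul_one]
  have h1 : 1 - κ ≤ A k ℓstar := le_trans (hdiag k) hAle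
  -- F ℓstar j ≥ 1/K
  have h2 : (1 : ℝ) ≤ K * F ℓstar j := by
    calc (1 : ℝ) = ∑ q, F q j := (hF1 j).symm
      _ ≤ ∑ _q : Fin K, F ℓstar j := Finset.sum_le_sum (fun i _ => hq i)
      _ = K * F ℓstar j := by simp [Finset.sum_const, Finset.card_univ, nsmul_eq_mul]
  -- lower bound on (A*F) k j
  have h3 : A k ℓstar * F ℓstar j ≤ (A * F) k j := by
    rw [Matrix.mul_apply]
    exact Finset.single_le_sum (fun i _ => mul_nonneg (hA0 k i) (hF0 i j))
      (Finset.mem_univ ℓstar)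
  have h4 : A k ℓstar * F ℓstar j ≤ κ := le_trans h3 (hoff k j hkj)
  have hKpos : (0 : ℝ) < K := by exact_mod_cast hK
  have hF0' : 0 ≤ F ℓstar j := hF0 ℓstar j
  have hκ' : κ * (K + 1) < 1 := by
    rw [div_eq_inv_mul] at hκ; rw [mul_one] at hκ
    have hK1 : (0 : ℝ) < (K : ℝ) + 1 := by linarith
    calc κ * (K + 1) < ((K : ℝ) + 1)⁻¹ * (K + 1) := by
          exact mul_lt_mul_of_pos_right hκ hK1
      _ = 1 := inv_mul_cancel₀ (ne_of_gt hK1)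
  nlinarith [mul_le_mul_of_nonneg_left h4 (le_of_lt hKpos),
    mul_le_mul_of_nonneg_right h1 hF0']
end

section
/- Let K, J ≥ 1 and let Y ∈ ℝ^{K×J} be entrywise nonnegative with every column summing to 1, rank(Y) = K, and Y satisfying the SSC. Let Q ∈ ℝ^{K×K} be any matrix such that Ŷ = Q·Y is entrywise nonnegative and every column of Ŷ sums to 1. Then |det(Q)| ≤ 1, and if |det(Q)| = 1 then Q is a permutation matrix. -/
open Matrix BigOperators

/-- Euclidean norm of a real vector. -/
noncomputable def l2norm {m : Type*} [Fintype m] (x : m → ℝ) : ℝ :=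
  Real.sqrt (∑ i, (x i) ^ 2)

/-- `P` is a permutation matrix. -/
def IsPermMatrix {K : ℕ} (P : Matrix (Fin K) (Fin K) ℝ) : Prop :=
  ∃ σ : Equiv.Perm (Fin K), ∀ i j, P i j = if σ i = j then 1 else 0

/-- The conic hull of the columns of `H`. -/
def coneOf {K : ℕ} {J : Type*} [Fintype J] (H : Matrix (Fin K) J ℝ) : Set (Fin K → ℝ) :=
  {x | ∃ θ : J → ℝ, (∀ j, 0 ≤ θ j) ∧ x = H.mulVec θ}

/-- The second-order cone `C = {x : √(K-1) ‖x‖₂ ≤ ∑ᵢ xᵢ}`. -/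
def socC (K : ℕ) : Set (Fin K → ℝ) :=
  {x | Real.sqrt ((K : ℝ) - 1) * l2norm x ≤ ∑ i, x i}

/-- The sufficiently scattered condition. -/
def SSC {K : ℕ} {J : Type*} [Fintype J] (H : Matrix (Fin K) J ℝ) : Prop :=
  socC K ⊆ coneOf H ∧
  ∀ Q : Matrix (Fin K) (Fin K) ℝ, Qᵀ * Q = 1 → ¬ IsPermMatrix Q → ¬ (coneOf H ⊆ coneOf Q)


/-!
Since `C ⊆ cone(Y)` and `QY ≥ 0`, every row `q` of `Q` pairs nonnegatively with the second-order
cone `C`, so it lies in the dual cone `{q : ‖q‖₂ ≤ ∑ q}`. Writing `1 = Yθ` with `θ ≥ 0`, the row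
sums `rᵢ` of `Q` add up to `1ᵀQYθ = 1ᵀθ = 1ᵀYθ = K`. Hadamard's inequality and AM–GM then give
`|det Q| ≤ ∏ ‖qᵢ‖ ≤ ∏ rᵢ ≤ 1`. Equality forces `rᵢ = 1` and `QQᵀ = I`, so `Qᵀ` is orthogonal with
`cone(Y) ⊆ cone(Qᵀ)`, and the second clause of the SSC makes `Qᵀ`, hence `Q`, a permutation.
-/

lemma prod_le_one_of_sum_le_card {ι : Type*} [Fintype ι] {x : ι → ℝ} (hx : ∀ i, 0 ≤ x i)
    (hsum : ∑ i, x i ≤ Fintype.card ι) :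
    ∏ i, x i ≤ 1 ∧ (∏ i, x i = 1 → ∀ i, x i = 1) := by
  have hexp : ∏ i, Real.exp (x i - 1) = Real.exp (∑ i, x i - Fintype.card ι) := by
    simp [← Real.exp_sum, Finset.sum_sub_distrib]
  have hexp_le : Real.exp (∑ i, x i - Fintype.card ι) ≤ 1 :=
    Real.exp_le_one_iff.2 (by linarith)
  have hle : ∀ i, x i ≤ Real.exp (x i - 1) := fun i => by
    linarith [Real.add_one_le_exp (x i - 1)]
  have hprod_le : ∏ i, x i ≤ ∏ i, Real.exp (x i - 1) :=
    Finset.prod_le_prod (fun i _ => hx i) (fun i _ => hle i)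
  refine ⟨by linarith, fun hprod i => ?_⟩
  by_contra hne
  have hpos : ∀ j, 0 < x j := fun j =>
    (hx j).lt_of_ne fun h => by simp [Finset.prod_eq_zero (Finset.mem_univ j) h.symm] at hprod
  have hlt : x i < Real.exp (x i - 1) := by
    linarith [Real.add_one_lt_exp (x := x i - 1) (sub_ne_zero.2 hne)]
  have := Finset.prod_lt_prod (fun j _ => hpos j) (fun j _ => hle j) ⟨i, Finset.mem_univ i, hlt⟩
  linarith

namespace Matrix

variable {n : Type*} [Fintype n] [DecidableEq n]

lemma PosSemidef.det_le_one_of_trace_le {A : Matrix n n ℝ} (hA : A.PosSemidef)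
    (htr : A.trace ≤ Fintype.card n) : A.det ≤ 1 ∧ (A.det = 1 → A = 1) := by
  have hH : A.IsHermitian := hA.1
  have hdet : A.det = ∏ i, hH.eigenvalues i := by simp [hH.det_eq_prod_eigenvalues]
  have hsum : ∑ i, hH.eigenvalues i ≤ Fintype.card n := by
    simpa [hH.trace_eq_sum_eigenvalues] using htr
  obtain ⟨hle, heq⟩ := prod_le_one_of_sum_le_card hA.eigenvalues_nonneg hsum
  refine ⟨hdet ▸ hle, fun h1 => ?_⟩
  have hev : RCLike.ofReal ∘ hH.eigenvalues = fun _ => (1 : ℝ) := funext fun i => by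
    simp [heq (hdet ▸ h1) i]
  rw [hH.spectral_theorem, hev, diagonal_one, map_one]

lemma abs_det_le_one_of_sum_sq_le_one {M : Matrix n n ℝ} (hM : ∀ i, ∑ k, M i k ^ 2 ≤ 1) :
    |M.det| ≤ 1 ∧ (|M.det| = 1 → M * Mᵀ = 1) := by
  have hpsd : (M * Mᵀ).PosSemidef := by
    simpa using posSemidef_self_mul_conjTranspose M
  have htr : (M * Mᵀ).trace ≤ Fintype.card n := by
    simpa [trace, mul_apply, ← sq] using Finset.sum_le_sum fun i (_ : i ∈ Finset.univ) => hM i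
  have hdet : (M * Mᵀ).det = M.det ^ 2 := by rw [det_mul, det_transpose, sq]
  obtain ⟨hle, heq⟩ := hpsd.det_le_one_of_trace_le htr
  rw [hdet] at hle heq
  exact ⟨sq_le_one_iff_abs_le_one _ |>.1 hle, fun h => heq (by rw [← sq_abs, h, one_pow])⟩

lemma abs_det_le_prod_of_sum_sq_le {Q : Matrix n n ℝ} {r : n → ℝ} (hr : ∀ i, 0 ≤ r i)
    (hQ : ∀ i, ∑ k, Q i k ^ 2 ≤ r i ^ 2) : |Q.det| ≤ ∏ i, r i := by
  by_cases hzero : ∃ i, r i = 0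
  · obtain ⟨i, hi⟩ := hzero
    have hrow : ∀ k, Q i k = 0 := fun k => by
      have := (Finset.single_le_sum (fun k _ => sq_nonneg (Q i k)) (Finset.mem_univ k)).trans (hQ i)
      simpa [hi] using this
    rw [det_eq_zero_of_row_eq_zero i hrow, abs_zero]
    exact Finset.prod_nonneg fun i _ => hr i
  push Not at hzero
  set M : Matrix n n ℝ := of fun i k => Q i k / r i
  have hQM : Q = diagonal r * M := by
    ext i k; simp [M, diagonal_mul, mul_div_cancel₀ _ (hzero i)]
  have hM : ∀ i, ∑ k, M i k ^ 2 ≤ 1 := fun i => by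
    simpa [M, div_pow, ← Finset.sum_div, div_le_one (pow_pos ((hr i).lt_of_ne' (hzero i)) 2)]
      using hQ i
  rw [hQM, det_mul, det_diagonal, abs_mul, abs_of_nonneg (Finset.prod_nonneg fun i _ => hr i)]
  exact mul_le_of_le_one_right (Finset.prod_nonneg fun i _ => hr i)
    (abs_det_le_one_of_sum_sq_le_one hM).1

end Matrix

lemma mem_socC_iff {K : ℕ} (hK : 1 ≤ K) {y : Fin K → ℝ} :
    y ∈ socC K ↔ 0 ≤ ∑ k, y k ∧ ((K : ℝ) - 1) * ∑ k, y k ^ 2 ≤ (∑ k, y k) ^ 2 := by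
  have hK' : (0 : ℝ) ≤ K - 1 := sub_nonneg.2 (by exact_mod_cast hK)
  rw [socC, Set.mem_ofPred_eq, l2norm, ← Real.sqrt_mul hK', Real.sqrt_le_iff]

lemma one_mem_socC {K : ℕ} (hK : 1 ≤ K) : (1 : Fin K → ℝ) ∈ socC K := by
  rw [mem_socC_iff hK]
  simp only [Pi.one_apply, one_pow, Finset.sum_const, Finset.card_univ, Fintype.card_fin,
    nsmul_eq_mul, mul_one]
  constructor <;> nlinarith

lemma sum_nonneg_and_sum_sq_le_of_dotProduct_socC_nonneg {K : ℕ} (hK : 1 ≤ K) {q : Fin K → ℝ}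
    (hq : ∀ y ∈ socC K, 0 ≤ q ⬝ᵥ y) : 0 ≤ ∑ k, q k ∧ ∑ k, q k ^ 2 ≤ (∑ k, q k) ^ 2 := by
  have hKpos : (0 : ℝ) < K := by exact_mod_cast hK
  have hK1 : (0 : ℝ) ≤ K - 1 := sub_nonneg.2 (by exact_mod_cast hK)
  set s := ∑ k, q k
  have hs : 0 ≤ s := by simpa [s, dotProduct_one] using hq 1 (one_mem_socC hK)
  refine ⟨hs, ?_⟩
  set u : Fin K → ℝ := fun k => q k - s / K
  set n2 := ∑ k, u k ^ 2
  have hu : ∑ k, u k = 0 := by simp [u, s, Finset.sum_sub_distrib, mul_div_cancel₀ _ hKpos.ne']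
  have hq2 : ∑ k, q k ^ 2 = n2 + s ^ 2 / K := by
    have : ∀ k, q k ^ 2 = u k ^ 2 + 2 * (s / K) * u k + (s / K) ^ 2 := fun k => by ring
    simp only [this, Finset.sum_add_distrib, ← Finset.mul_sum, hu]
    simp [n2]
    field_simp
  have hqu : q ⬝ᵥ u = n2 := by
    have : ∀ k, q k * u k = u k ^ 2 + s / K * u k := fun k => by ring
    simp only [dotProduct, this, Finset.sum_add_distrib, ← Finset.mul_sum, hu, mul_zero,
      add_zero, n2]
  by_contra! hlt
  have hlt' : (K - 1) * s ^ 2 < K * n2 := by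
    rw [hq2] at hlt; field_simp at hlt; linarith
  have hn2 : 0 < n2 := by nlinarith [mul_nonneg hK1 (sq_nonneg s)]
  set a := Real.sqrt ((K - 1) * n2 / K)
  have ha2 : a ^ 2 = (K - 1) * n2 / K :=
    Real.sq_sqrt (div_nonneg (mul_nonneg hK1 hn2.le) hKpos.le)
  -- `y = a • 1 - u` lies on the boundary of `C` but pairs negatively with `q`.
  set y : Fin K → ℝ := fun k => a - u k
  have hy_sum : ∑ k, y k = K * a := by simp [y, Finset.sum_sub_distrib, hu]
  have hy_sq : ∑ k, y k ^ 2 = K * a ^ 2 + n2 := by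
    have : ∀ k, y k ^ 2 = a ^ 2 - 2 * a * u k + u k ^ 2 := fun k => by ring
    simp only [this, Finset.sum_add_distrib, Finset.sum_sub_distrib, ← Finset.mul_sum, hu]
    simp [n2]
  have hy : y ∈ socC K := by
    rw [mem_socC_iff hK, hy_sum, hy_sq]
    refine ⟨by positivity, le_of_eq ?_⟩
    rw [mul_pow, ha2]
    field_simp
    ring
  have hqy : q ⬝ᵥ y = a * s - n2 := by
    simp [y, dotProduct, mul_sub, Finset.sum_sub_distrib, ← Finset.sum_mul, ← hqu, mul_comm a,
      s]
  have has : a * s < n2 := by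
    refine lt_of_abs_lt (abs_lt_of_sq_lt_sq ?_ hn2.le)
    rw [mul_pow, ha2, div_mul_eq_mul_div, div_lt_iff₀ hKpos]
    nlinarith
  linarith [hq y hy]

lemma Matrix.sum_mulVec_of_sum_col_eq_one {R m n : Type*} [NonAssocSemiring R] [Fintype m]
    [Fintype n] {M : Matrix m n R} (hM : ∀ j, ∑ i, M i j = 1) (x : n → R) :
    ∑ i, (M *ᵥ x) i = ∑ j, x j := by
  simp only [mulVec, dotProduct]
  rw [Finset.sum_comm]
  simp [← Finset.sum_mul, hM]

lemma mulVec_nonneg_of_mem_coneOf {m J : Type*} [Fintype J] {K : ℕ} {H : Matrix (Fin K) J ℝ}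
    {Q : Matrix m (Fin K) ℝ} (hQH : ∀ i j, 0 ≤ (Q * H) i j) {y : Fin K → ℝ} (hy : y ∈ coneOf H)
    (i : m) : 0 ≤ (Q *ᵥ y) i := by
  obtain ⟨θ, hθ, rfl⟩ := hy
  rw [mulVec_mulVec]
  exact Finset.sum_nonneg fun j _ => mul_nonneg (hQH i j) (hθ j)

lemma IsPermMatrix.transpose {K : ℕ} {P : Matrix (Fin K) (Fin K) ℝ} (hP : IsPermMatrix P) :
    IsPermMatrix Pᵀ := by
  obtain ⟨σ, hσ⟩ := hP
  refine ⟨σ⁻¹, fun i j => ?_⟩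
  rw [transpose_apply, hσ]
  simp_rw [Equiv.Perm.inv_eq_iff_eq, eq_comm]

lemma SSC.isPermMatrix_of_mul_transpose_eq_one {K : ℕ} {J : Type*} [Fintype J]
    {Y : Matrix (Fin K) J ℝ} (hY : SSC Y) {Q : Matrix (Fin K) (Fin K) ℝ} (hQ : Q * Qᵀ = 1)
    (hQY : ∀ y ∈ coneOf Y, ∀ i, 0 ≤ (Q *ᵥ y) i) : IsPermMatrix Q := by
  have hsub : coneOf Y ⊆ coneOf Qᵀ := fun y hy =>
    ⟨Q *ᵥ y, hQY y hy, by rw [mulVec_mulVec, mul_eq_one_comm.1 hQ, one_mulVec]⟩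
  by_contra hQp
  exact hY.2 Qᵀ (by rwa [transpose_transpose]) (fun h => hQp (by simpa using h.transpose)) hsub

theorem stmt3_general {K J : ℕ} (hK : 1 ≤ K)
    (Y : Matrix (Fin K) (Fin J) ℝ)
    (hY1 : ∀ j, ∑ i, Y i j = 1)
    (hYssc : SSC Y)
    (Q : Matrix (Fin K) (Fin K) ℝ)
    (hQY0 : ∀ i j, 0 ≤ (Q * Y) i j) (hQY1 : ∀ j, ∑ i, (Q * Y) i j = 1) :
    |Q.det| ≤ 1 ∧ (|Q.det| = 1 → IsPermMatrix Q) := by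
  set r : Fin K → ℝ := fun i => ∑ k, Q i k
  have hrow : ∀ i, 0 ≤ r i ∧ ∑ k, Q i k ^ 2 ≤ r i ^ 2 := fun i =>
    sum_nonneg_and_sum_sq_le_of_dotProduct_socC_nonneg hK fun y hy =>
      mulVec_nonneg_of_mem_coneOf hQY0 (hYssc.1 hy) i
  obtain ⟨θ, -, hθ⟩ := hYssc.1 (one_mem_socC hK)
  have hr_sum : ∑ i, r i = K := calc
    ∑ i, r i = ∑ i, (Q *ᵥ Y *ᵥ θ) i := by simp [r, ← hθ, mulVec, dotProduct_one]
    _ = ∑ j, θ j := by rw [mulVec_mulVec, sum_mulVec_of_sum_col_eq_one hQY1]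
    _ = ∑ i, (Y *ᵥ θ) i := (sum_mulVec_of_sum_col_eq_one hY1 θ).symm
    _ = K := by simp [← hθ]
  have hdet : |Q.det| ≤ ∏ i, r i :=
    abs_det_le_prod_of_sum_sq_le (fun i => (hrow i).1) fun i => (hrow i).2
  obtain ⟨hprod, hprod_eq⟩ := prod_le_one_of_sum_le_card (fun i => (hrow i).1) (by simp [hr_sum])
  refine ⟨hdet.trans hprod, fun hQ => ?_⟩
  have hr1 : ∀ i, r i = 1 := hprod_eq (hprod.antisymm (hQ ▸ hdet))
  have hQQ : Q * Qᵀ = 1 :=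
    (abs_det_le_one_of_sum_sq_le_one fun i => by simpa [hr1 i] using (hrow i).2).2 hQ
  exact hYssc.isPermMatrix_of_mul_transpose_eq_one hQQ fun y hy =>
    mulVec_nonneg_of_mem_coneOf hQY0 hy

theorem stmt3 {K J : ℕ} (hK : 1 ≤ K) (hJ : 1 ≤ J)
    (Y : Matrix (Fin K) (Fin J) ℝ)
    (hY0 : ∀ i j, 0 ≤ Y i j) (hY1 : ∀ j, ∑ i, Y i j = 1)
    (hYrank : Y.rank = K) (hYssc : SSC Y)
    (Q : Matrix (Fin K) (Fin K) ℝ)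
    (hQY0 : ∀ i j, 0 ≤ (Q * Y) i j) (hQY1 : ∀ j, ∑ i, (Q * Y) i j = 1) :
    |Q.det| ≤ 1 ∧ (|Q.det| = 1 → IsPermMatrix Q) :=
  stmt3_general hK Y hY1 hYssc Q hQY0 hQY1
end

section
/- Let I, K ≥ 1 and ρ > 0, and let X ∈ ℝ^{I×K} be entrywise nonnegative with every column summing to ρ, rank(X) = K, and X^T satisfying the SSC. Let Q ∈ ℝ^{K×K} be any matrix such that X̂ = X·Q is entrywise nonnegative and every column of X̂ sums to ρ. Then |det(Q)| ≤ 1, and if |det(Q)| = 1 then Q is a permutation matrix. -/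
/-!
The columns `q_k` of `Q` sum to one, and since `X * Q ≥ 0` they are nonnegative on the cone
spanned by the rows of `X`, hence on the second-order cone `C` it contains. Testing against a
boundary point of `C` shows that this forces `‖q_k‖² ≤ (∑ⱼ q_jk)² = 1`. So the Gram matrix `QᵀQ`
is positive semidefinite with trace at most `K`, and AM-GM on its eigenvalues gives
`det Q ^ 2 = det (QᵀQ) ≤ 1`, with equality only if all eigenvalues are `1`, i.e. `Q` is
orthogonal. An orthogonal `Q` with `Qᵀ` nonnegative on the cone of `Xᵀ` has that cone inside
`cone Q`, which the sufficiently scattered condition allows only for permutation matrices.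
-/

open Matrix BigOperators

section AMGM

variable {ι : Type*} [Fintype ι] {w : ι → ℝ}

theorem Real.prod_le_one_of_sum_le_card (h0 : ∀ i, 0 ≤ w i)
    (hs : ∑ i, w i ≤ Fintype.card ι) : ∏ i, w i ≤ 1 := by
  obtain ⟨i, hi⟩ | hne := em (∃ i, w i = 0)
  · simp [Finset.prod_eq_zero (Finset.mem_univ i) hi]
  · have hpos i : 0 < w i := (h0 i).lt_of_ne' fun hi => hne ⟨i, hi⟩
    rw [← Real.exp_log (Finset.prod_pos fun i _ => hpos i), Real.exp_le_one_iff,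
      Real.log_prod fun i _ => (hpos i).ne']
    calc ∑ i, Real.log (w i) ≤ ∑ i, (w i - 1) :=
          Finset.sum_le_sum fun i _ => Real.log_le_sub_one_of_pos (hpos i)
      _ ≤ 0 := by simpa [Finset.sum_sub_distrib] using hs

theorem Real.eq_one_of_prod_eq_one_of_sum_le_card (h0 : ∀ i, 0 ≤ w i)
    (hs : ∑ i, w i ≤ Fintype.card ι) (hp : ∏ i, w i = 1) (i : ι) : w i = 1 := by
  have hpos j : 0 < w j :=
    (h0 j).lt_of_ne' fun hj => by simp [Finset.prod_eq_zero (Finset.mem_univ j) hj] at hp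
  -- `w - 1 - log w` is a nonnegative function with nonpositive sum, vanishing only at `1`.
  have hgap j : 0 ≤ w j - 1 - Real.log (w j) := by
    linarith [Real.log_le_sub_one_of_pos (hpos j)]
  have hsum : ∑ j, (w j - 1 - Real.log (w j)) ≤ 0 := by
    rw [Finset.sum_sub_distrib, ← Real.log_prod fun j _ => (hpos j).ne', hp]
    simpa [Finset.sum_sub_distrib] using hs
  have hzero := (Finset.sum_eq_zero_iff_of_nonneg fun j _ => hgap j).mp
    (hsum.antisymm (Finset.sum_nonneg fun j _ => hgap j)) i (Finset.mem_univ i)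
  by_contra hne
  linarith [Real.log_lt_sub_one_of_pos (hpos i) hne]

end AMGM

theorem Matrix.IsHermitian.eq_one_of_eigenvalues_eq_one {n : Type*} [Fintype n] [DecidableEq n]
    {A : Matrix n n ℝ} (hA : A.IsHermitian) (h1 : ∀ i, hA.eigenvalues i = 1) : A = 1 := by
  rw [hA.spectral_theorem, show (RCLike.ofReal ∘ hA.eigenvalues : n → ℝ) = fun _ => 1 from
    funext h1, diagonal_one, map_one]

section PosSemidef

variable {n : Type*} [Fintype n] [DecidableEq n] {G : Matrix n n ℝ}

theorem Matrix.IsHermitian.sum_eigenvalues_eq_trace (hG : G.IsHermitian) :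
    ∑ i, hG.eigenvalues i = G.trace := by
  simpa using hG.trace_eq_sum_eigenvalues.symm

theorem Matrix.IsHermitian.prod_eigenvalues_eq_det (hG : G.IsHermitian) :
    ∏ i, hG.eigenvalues i = G.det := by
  simpa using hG.det_eq_prod_eigenvalues.symm

theorem Matrix.PosSemidef.det_le_one_of_trace_le_card (hG : G.PosSemidef)
    (htr : G.trace ≤ Fintype.card n) : G.det ≤ 1 := by
  rw [← hG.1.prod_eigenvalues_eq_det]
  exact Real.prod_le_one_of_sum_le_card hG.eigenvalues_nonneg
    (hG.1.sum_eigenvalues_eq_trace ▸ htr)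

theorem Matrix.PosSemidef.eq_one_of_det_eq_one_of_trace_le_card (hG : G.PosSemidef)
    (htr : G.trace ≤ Fintype.card n) (hdet : G.det = 1) : G = 1 :=
  hG.1.eq_one_of_eigenvalues_eq_one <| Real.eq_one_of_prod_eq_one_of_sum_le_card
    hG.eigenvalues_nonneg (hG.1.sum_eigenvalues_eq_trace ▸ htr)
    (hG.1.prod_eigenvalues_eq_det ▸ hdet)

end PosSemidef

section Gram

variable {n : Type*} [Fintype n] {Q : Matrix n n ℝ}

theorem Matrix.posSemidef_transpose_mul_self (Q : Matrix n n ℝ) : (Qᵀ * Q).PosSemidef := by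
  simpa using posSemidef_conjTranspose_mul_self Q

theorem Matrix.trace_transpose_mul_self_le_card (hQ : ∀ k, ∑ j, Q j k ^ 2 ≤ 1) :
    (Qᵀ * Q).trace ≤ Fintype.card n := by
  simpa [trace, mul_apply, sq] using Finset.sum_le_sum fun k (_ : k ∈ Finset.univ) => hQ k

variable [DecidableEq n]

theorem Matrix.sq_det_le_one_of_col_norm_le_one (hQ : ∀ k, ∑ j, Q j k ^ 2 ≤ 1) :
    Q.det ^ 2 ≤ 1 := by
  simpa [det_mul, sq] using (posSemidef_transpose_mul_self Q).det_le_one_of_trace_le_card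
    (trace_transpose_mul_self_le_card hQ)

theorem Matrix.transpose_mul_self_eq_one_of_sq_det_eq_one (hQ : ∀ k, ∑ j, Q j k ^ 2 ≤ 1)
    (hdet : Q.det ^ 2 = 1) : Qᵀ * Q = 1 :=
  (posSemidef_transpose_mul_self Q).eq_one_of_det_eq_one_of_trace_le_card
    (trace_transpose_mul_self_le_card hQ) (by rw [det_mul, det_transpose, ← sq, hdet])

end Gram

section SecondOrderCone

theorem one_mem_socC_s4 (K : ℕ) : (fun _ => (1 : ℝ)) ∈ socC K := by
  simp only [socC, l2norm, Set.mem_ofPred_eq, one_pow, Finset.sum_const, Finset.card_univ,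
    Fintype.card_fin, nsmul_eq_mul, mul_one]
  calc √((K : ℝ) - 1) * √K ≤ √K * √K := by gcongr; linarith
    _ = K := Real.mul_self_sqrt K.cast_nonneg

theorem sub_mem_socC {K : ℕ} (hK : 1 ≤ K) {v : Fin K → ℝ} (hv : ∑ j, v j = 0) :
    (fun j => √((K : ℝ) - 1) * √(∑ i, v i ^ 2) - √K * v j) ∈ socC K := by
  set r := √((K : ℝ) - 1)
  set n := √(∑ i, v i ^ 2)
  have hr : r ^ 2 = K - 1 := Real.sq_sqrt (by simp [hK])
  have hq : √(K : ℝ) ^ 2 = K := Real.sq_sqrt K.cast_nonneg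
  have hn : n ^ 2 = ∑ i, v i ^ 2 := Real.sq_sqrt (Finset.sum_nonneg fun i _ => sq_nonneg _)
  have hsum : ∑ j, (r * n - √K * v j) = K * (r * n) := by
    simp [Finset.sum_sub_distrib, ← Finset.mul_sum, hv]
  have hsq : ∑ j, (r * n - √K * v j) ^ 2 = (K * n) ^ 2 := by
    simp only [sub_sq, mul_pow, Finset.sum_add_distrib, Finset.sum_sub_distrib,
      ← Finset.mul_sum, Finset.sum_const, Finset.card_univ, Fintype.card_fin, nsmul_eq_mul]
    rw [hv, hr, hq, ← hn]
    ring
  simp only [socC, l2norm, Set.mem_ofPred_eq, hsum, hsq]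
  rw [Real.sqrt_sq (by positivity)]
  exact le_of_eq (by ring)

theorem sum_sub_mean_eq_zero {K : ℕ} (hK : 1 ≤ K) (y : Fin K → ℝ) :
    ∑ j, (y j - (∑ i, y i) / K) = 0 := by
  simp [Finset.sum_sub_distrib, mul_div_cancel₀ _ (show (K : ℝ) ≠ 0 by positivity)]

theorem mul_sum_sq_sub_mean_le_of_nonneg_on_socC {K : ℕ} (hK : 1 ≤ K) {y : Fin K → ℝ}
    (hy : ∀ x ∈ socC K, 0 ≤ y ⬝ᵥ x) :
    K * ∑ j, (y j - (∑ i, y i) / K) ^ 2 ≤ (K - 1) * (∑ j, y j) ^ 2 := by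
  set s := ∑ j, y j
  have hs : 0 ≤ s := by simpa [dotProduct] using hy _ (one_mem_socC_s4 K)
  set v : Fin K → ℝ := fun j => y j - s / K
  set m := ∑ j, v j ^ 2
  have hv : ∑ j, v j = 0 := sum_sub_mean_eq_zero hK y
  set r := √((K : ℝ) - 1)
  set n := √m
  have hr : r ^ 2 = K - 1 := Real.sq_sqrt (by simp [hK])
  have hq : √(K : ℝ) ^ 2 = K := Real.sq_sqrt K.cast_nonneg
  have hn : n ^ 2 = m := Real.sq_sqrt (Finset.sum_nonneg fun i _ => sq_nonneg _)
  have hyv : y ⬝ᵥ v = m := by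
    have hy j : y j = s / K + v j := by simp [v]
    simp only [dotProduct, hy, add_mul, Finset.sum_add_distrib, ← Finset.mul_sum, hv, m, sq,
      mul_zero, zero_add]
  have htest : 0 ≤ r * n * s - √K * n ^ 2 := by
    have hdot : y ⬝ᵥ (fun j => r * n - √K * v j) = r * n * s - √K * m := by
      rw [← hyv]
      simp only [dotProduct, mul_sub, Finset.sum_sub_distrib, Finset.mul_sum, s]
      congr 1 <;> exact Finset.sum_congr rfl fun j _ => by ring
    rw [hn, ← hdot]
    exact hy _ (sub_mem_socC hK hv)
  have hqn : √K * n ≤ r * s := by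
    rcases (Real.sqrt_nonneg m).eq_or_lt with hn0 | hnpos
    · rw [show n = 0 from hn0.symm, mul_zero]
      positivity
    · nlinarith
  calc K * m = (√K * n) ^ 2 := by rw [mul_pow, hq, hn]
    _ ≤ (r * s) ^ 2 := pow_le_pow_left₀ (by positivity) hqn 2
    _ = (K - 1) * s ^ 2 := by rw [mul_pow, hr]

theorem sum_sq_le_sq_sum_of_nonneg_on_socC {K : ℕ} {y : Fin K → ℝ}
    (hy : ∀ x ∈ socC K, 0 ≤ y ⬝ᵥ x) : ∑ j, y j ^ 2 ≤ (∑ j, y j) ^ 2 := by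
  rcases Nat.eq_zero_or_pos K with rfl | hK
  · simp
  have hcentred := mul_sum_sq_sub_mean_le_of_nonneg_on_socC hK hy
  have hv := sum_sub_mean_eq_zero hK y
  set s := ∑ j, y j
  have hKpos : (0 : ℝ) < K := by exact_mod_cast hK
  have hdecomp : K * ∑ j, y j ^ 2 = s ^ 2 + K * ∑ j, (y j - s / K) ^ 2 := by
    have hsq j : y j ^ 2 = (y j - s / K) ^ 2 + 2 * (s / K) * (y j - s / K) + (s / K) ^ 2 := by
      ring
    simp only [hsq, Finset.sum_add_distrib, ← Finset.mul_sum, hv,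
      Finset.sum_const, Finset.card_univ, Fintype.card_fin, nsmul_eq_mul]
    field_simp
    ring
  nlinarith

end SecondOrderCone

section Cone

variable {K : ℕ} {J : Type*} [Fintype J] {H : Matrix (Fin K) J ℝ} {Q : Matrix (Fin K) (Fin K) ℝ}
  {x : Fin K → ℝ}

theorem transpose_mulVec_nonneg_of_mem_coneOf (hQ : ∀ j k, 0 ≤ (Hᵀ * Q) j k)
    (hx : x ∈ coneOf H) (k : Fin K) : 0 ≤ (Qᵀ *ᵥ x) k := by
  obtain ⟨θ, hθ, rfl⟩ := hx
  rw [mulVec_mulVec, ← transpose_transpose H, ← transpose_mul]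
  exact Finset.sum_nonneg fun j _ => mul_nonneg (hQ j k) (hθ j)

theorem mem_coneOf_of_transpose_mul_self_eq_one (hQ : Qᵀ * Q = 1)
    (hx : ∀ k, 0 ≤ (Qᵀ *ᵥ x) k) : x ∈ coneOf Q :=
  ⟨Qᵀ *ᵥ x, hx, by rw [mulVec_mulVec, mul_eq_one_comm.mp hQ, one_mulVec]⟩

end Cone

theorem Matrix.sum_mul_apply_of_sum_col_eq {m n : Type*} [Fintype m] [Fintype n]
    {X : Matrix m n ℝ} {ρ : ℝ} (hX : ∀ j, ∑ i, X i j = ρ) (Q : Matrix n n ℝ) (k : n) :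
    ∑ i, (X * Q) i k = ρ * ∑ j, Q j k := by
  calc ∑ i, (X * Q) i k = ∑ j, (∑ i, X i j) * Q j k := by
        simp only [mul_apply, Finset.sum_mul]
        exact Finset.sum_comm
    _ = ρ * ∑ j, Q j k := by simp only [hX, Finset.mul_sum]

theorem stmt4_general {I K : ℕ} (ρ : ℝ) (hρ : 0 < ρ)
    (X : Matrix (Fin I) (Fin K) ℝ)
    (hX1 : ∀ k, ∑ i, X i k = ρ)
    (hXssc : SSC Xᵀ)
    (Q : Matrix (Fin K) (Fin K) ℝ)
    (hXQ0 : ∀ i k, 0 ≤ (X * Q) i k) (hXQ1 : ∀ k, ∑ i, (X * Q) i k = ρ) :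
    |Q.det| ≤ 1 ∧ (|Q.det| = 1 → IsPermMatrix Q) := by
  have hQsum k : ∑ j, Q j k = 1 := by
    have := hXQ1 k
    rw [sum_mul_apply_of_sum_col_eq hX1] at this
    exact (mul_eq_left₀ hρ.ne').mp this
  have hdual x (hx : x ∈ coneOf Xᵀ) := transpose_mulVec_nonneg_of_mem_coneOf hXQ0 hx
  have hcol k : ∑ j, Q j k ^ 2 ≤ 1 := by
    simpa [hQsum] using sum_sq_le_sq_sum_of_nonneg_on_socC (y := fun j => Q j k)
      fun x hx => hdual x (hXssc.1 hx) k
  refine ⟨(sq_le_one_iff_abs_le_one _).mp (sq_det_le_one_of_col_norm_le_one hcol), fun h1 => ?_⟩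
  by_contra hperm
  have horth := transpose_mul_self_eq_one_of_sq_det_eq_one hcol (by rw [← sq_abs, h1, one_pow])
  exact hXssc.2 Q horth hperm fun x hx => mem_coneOf_of_transpose_mul_self_eq_one horth (hdual x hx)

theorem stmt4 {I K : ℕ} (hI : 1 ≤ I) (hK : 1 ≤ K) (ρ : ℝ) (hρ : 0 < ρ)
    (X : Matrix (Fin I) (Fin K) ℝ)
    (hX0 : ∀ i k, 0 ≤ X i k) (hX1 : ∀ k, ∑ i, X i k = ρ)
    (hXrank : X.rank = K) (hXssc : SSC Xᵀ)
    (Q : Matrix (Fin K) (Fin K) ℝ)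
    (hXQ0 : ∀ i k, 0 ≤ (X * Q) i k) (hXQ1 : ∀ k, ∑ i, (X * Q) i k = ρ) :
    |Q.det| ≤ 1 ∧ (|Q.det| = 1 → IsPermMatrix Q) :=
  stmt4_general ρ hρ X hX1 hXssc Q hXQ0 hXQ1
end

section
/- Let W ∈ ℝ^{L×K} be entrywise nonnegative with rank(W) = K and W^T satisfying the SSC, and let F ∈ ℝ^{K×N} be entrywise nonnegative with every column summing to 1, rank(F) = K, and F satisfying the SSC. If Ŵ ∈ ℝ^{L×K} is entrywise nonnegative, F̂ ∈ ℝ^{K×N} is entrywise nonnegative with every column summing to 1, and Ŵ·F̂ = W·F, then there exists a permutation matrix Π ∈ ℝ^{K×K} such that Ŵ = W·Π and F̂ = Π^T·F. -/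
open Matrix BigOperators

set_option maxHeartbeats 1000000

/-- A square real matrix of full rank has unit determinant. -/
lemma isUnit_det_of_rank_eq {K : ℕ} (M : Matrix (Fin K) (Fin K) ℝ) (h : M.rank = K) :
    IsUnit M.det := by
  rw [← Matrix.isUnit_iff_isUnit_det, ← Matrix.mulVec_surjective_iff_isUnit]
  have hrange : LinearMap.range M.mulVecLin = ⊤ := by
    apply Submodule.eq_top_of_finrank_eq
    rw [← Matrix.rank, h]
    simp
  intro y
  obtain ⟨x, hx⟩ := hrange ▸ Submodule.mem_top (x := y) (R := ℝ)
  exact ⟨x, hx⟩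

/-- Dual cone of the SOC: any vector making nonnegative inner product with
all of `socC K` satisfies `‖y‖ ≤ ∑ y`. -/
lemma dual_socC {K : ℕ} (y : Fin K → ℝ)
    (h : ∀ x ∈ socC K, 0 ≤ ∑ k, y k * x k) :
    Real.sqrt (∑ k, (y k) ^ 2) ≤ ∑ k, y k := by
  set r : ℝ := Real.sqrt (∑ k, (y k) ^ 2) with hrdef
  set s : ℝ := ∑ k, y k with hsdef
  have hsq : 0 ≤ ∑ k, (y k) ^ 2 := Finset.sum_nonneg fun k _ => sq_nonneg _
  have hr0 : 0 ≤ r := Real.sqrt_nonneg _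
  have hr2 : r ^ 2 = ∑ k, (y k) ^ 2 := Real.sq_sqrt hsq
  rcases eq_or_lt_of_le hr0 with hre | hrpos
  · -- r = 0 : every y k = 0
    have h0 : ∑ k, (y k) ^ 2 = 0 := (Real.sqrt_eq_zero hsq).mp hre.symm
    have hyk : ∀ k ∈ Finset.univ, (y k) ^ 2 = 0 :=
      (Finset.sum_eq_zero_iff_of_nonneg (fun k _ => sq_nonneg _)).mp h0
    have hs0 : s = 0 :=
      Finset.sum_eq_zero fun k hk => pow_eq_zero_iff (n := 2) (by norm_num) |>.mp (hyk k hk)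
    rw [← hre, hs0]
  · -- r > 0
    have hK1 : (1 : ℝ) ≤ K := by
      rcases Nat.eq_zero_or_pos K with hK | hK
      · exfalso; subst hK
        simp only [Finset.univ_eq_empty, Finset.sum_empty, Real.sqrt_zero] at hrdef
        exact hrpos.ne' hrdef
      · exact_mod_cast hK
    have hyle : ∀ k, y k ≤ r := by
      intro k
      have h1 : (y k) ^ 2 ≤ r ^ 2 := by
        rw [hr2]
        exact Finset.single_le_sum (f := fun k => (y k) ^ 2) (fun k _ => sq_nonneg _)
          (Finset.mem_univ k)
      nlinarith
    have hsum : ∑ k, (r - y k) = K * r - s := by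
      rw [Finset.sum_sub_distrib, Finset.sum_const, Finset.card_univ, Fintype.card_fin,
        nsmul_eq_mul]
    have hT : ∑ k, (r - y k) ^ 2 = K * r ^ 2 - 2 * r * s + r ^ 2 := by
      have he : ∀ k ∈ Finset.univ, (r - y k) ^ 2 = r ^ 2 - 2 * r * y k + (y k) ^ 2 :=
        fun k _ => by ring
      rw [Finset.sum_congr rfl he, Finset.sum_add_distrib, Finset.sum_sub_distrib,
        Finset.sum_const, ← Finset.mul_sum, Finset.card_univ, Fintype.card_fin,
        nsmul_eq_mul, ← hr2, ← hsdef]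
    have hKrs : s ≤ K * r := by
      have : s ≤ ∑ _k : Fin K, r := Finset.sum_le_sum fun k _ => hyle k
      rwa [Finset.sum_const, Finset.card_univ, Fintype.card_fin, nsmul_eq_mul] at this
    have hx : (fun k => r - y k) ∈ socC K := by
      show Real.sqrt ((K : ℝ) - 1) * l2norm (fun k => r - y k) ≤ ∑ k, (r - y k)
      rw [hsum]
      unfold l2norm
      rw [← Real.sqrt_mul (by linarith : (0:ℝ) ≤ (K : ℝ) - 1)]
      have hb : ((K : ℝ) - 1) * ∑ k, (r - y k) ^ 2 ≤ (K * r - s) ^ 2 := by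
        rw [hT]; nlinarith [sq_nonneg (s - r)]
      calc Real.sqrt (((K : ℝ) - 1) * ∑ k, (r - y k) ^ 2)
          ≤ Real.sqrt ((K * r - s) ^ 2) := Real.sqrt_le_sqrt hb
        _ = K * r - s := Real.sqrt_sq (by linarith)
    have hpos := h _ hx
    have hval : ∑ k, y k * (r - y k) = s * r - r ^ 2 := by
      have he : ∀ k ∈ Finset.univ, y k * (r - y k) = y k * r - (y k) ^ 2 :=
        fun k _ => by ring
      rw [Finset.sum_congr rfl he, Finset.sum_sub_distrib, ← Finset.sum_mul, ← hsdef, ← hr2]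
    rw [hval] at hpos
    nlinarith

theorem stmt6 {L N K : ℕ}
    (W : Matrix (Fin L) (Fin K) ℝ) (F : Matrix (Fin K) (Fin N) ℝ)
    (hW0 : ∀ i k, 0 ≤ W i k) (hWrank : W.rank = K) (hWssc : SSC Wᵀ)
    (hF0 : ∀ k n, 0 ≤ F k n) (hF1 : ∀ n, ∑ k, F k n = 1)
    (hFrank : F.rank = K) (hFssc : SSC F)
    (Wh : Matrix (Fin L) (Fin K) ℝ) (Fh : Matrix (Fin K) (Fin N) ℝ)
    (hWh0 : ∀ i k, 0 ≤ Wh i k)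
    (hFh0 : ∀ k n, 0 ≤ Fh k n) (hFh1 : ∀ n, ∑ k, Fh k n = 1)
    (heq : Wh * Fh = W * F) :
    ∃ Pm : Matrix (Fin K) (Fin K) ℝ,
      IsPermMatrix Pm ∧ Wh = W * Pm ∧ Fh = Pmᵀ * F := by
  -- Gram matrices are invertible
  have hG : IsUnit (F * Fᵀ).det :=
    isUnit_det_of_rank_eq _ (by rw [Matrix.rank_self_mul_transpose, hFrank])
  have hGW : IsUnit (Wᵀ * W).det :=
    isUnit_det_of_rank_eq _ (by rw [Matrix.rank_transpose_mul_self, hWrank])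
  have hWFrank : (W * F).rank = K := by
    refine le_antisymm ((Matrix.rank_mul_le_left W F).trans (le_of_eq hWrank)) ?_
    have hWr : W * F * (Fᵀ * (F * Fᵀ)⁻¹) = W := by
      rw [Matrix.mul_assoc, ← Matrix.mul_assoc F Fᵀ, Matrix.mul_nonsing_inv _ hG,
        Matrix.mul_one]
    calc K = W.rank := hWrank.symm
      _ = (W * F * (Fᵀ * (F * Fᵀ)⁻¹)).rank := by rw [hWr]
      _ ≤ (W * F).rank := Matrix.rank_mul_le_left _ _
  have hWhrank : Wh.rank = K := by
    refine le_antisymm (le_trans Wh.rank_le_card_width (by simp)) ?_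
    calc K = (W * F).rank := hWFrank.symm
      _ = (Wh * Fh).rank := by rw [heq]
      _ ≤ Wh.rank := Matrix.rank_mul_le_left _ _
  have hFhrank : Fh.rank = K := by
    refine le_antisymm (le_trans (Matrix.rank_le_card_height Fh) (by simp)) ?_
    calc K = (W * F).rank := hWFrank.symm
      _ = (Wh * Fh).rank := by rw [heq]
      _ ≤ Fh.rank := Matrix.rank_mul_le_right _ _
  have hGh : IsUnit (Whᵀ * Wh).det :=
    isUnit_det_of_rank_eq _ (by rw [Matrix.rank_transpose_mul_self, hWhrank])
  have hGf : IsUnit (Fh * Fhᵀ).det :=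
    isUnit_det_of_rank_eq _ (by rw [Matrix.rank_self_mul_transpose, hFhrank])
  -- the change-of-basis matrices
  obtain ⟨A, B, hAF, hBF, hWB, hAB⟩ :
      ∃ A B : Matrix (Fin K) (Fin K) ℝ,
        A * F = Fh ∧ B * Fh = F ∧ W * B = Wh ∧ A * B = 1 := by
    refine ⟨(Whᵀ * Wh)⁻¹ * (Whᵀ * W), (Wᵀ * W)⁻¹ * (Wᵀ * Wh), ?_, ?_, ?_, ?_⟩
    · rw [Matrix.mul_assoc, Matrix.mul_assoc, ← heq, ← Matrix.mul_assoc Whᵀ,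
        ← Matrix.mul_assoc, Matrix.nonsing_inv_mul _ hGh, Matrix.one_mul]
    · rw [Matrix.mul_assoc, Matrix.mul_assoc, heq, ← Matrix.mul_assoc Wᵀ,
        ← Matrix.mul_assoc, Matrix.nonsing_inv_mul _ hGW, Matrix.one_mul]
    · -- W * B = Wh
      have hBF' : ((Wᵀ * W)⁻¹ * (Wᵀ * Wh)) * Fh = F := by
        rw [Matrix.mul_assoc, Matrix.mul_assoc, heq, ← Matrix.mul_assoc Wᵀ,
          ← Matrix.mul_assoc, Matrix.nonsing_inv_mul _ hGW, Matrix.one_mul]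
      set B := (Wᵀ * W)⁻¹ * (Wᵀ * Wh)
      have h1 : (W * B) * Fh = Wh * Fh := by rw [Matrix.mul_assoc, hBF', heq]
      have h2 : (W * B) * (Fh * Fhᵀ) = Wh * (Fh * Fhᵀ) := by
        simp only [← Matrix.mul_assoc]; rw [h1]
      calc W * B = (W * B) * ((Fh * Fhᵀ) * (Fh * Fhᵀ)⁻¹) := by
            rw [Matrix.mul_nonsing_inv _ hGf, Matrix.mul_one]
        _ = ((W * B) * (Fh * Fhᵀ)) * (Fh * Fhᵀ)⁻¹ := by simp only [Matrix.mul_assoc]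
        _ = Wh * ((Fh * Fhᵀ) * (Fh * Fhᵀ)⁻¹) := by rw [h2]; simp only [Matrix.mul_assoc]
        _ = Wh := by rw [Matrix.mul_nonsing_inv _ hGf, Matrix.mul_one]
    · -- A * B = 1, via B * A = 1
      have hAF' : ((Whᵀ * Wh)⁻¹ * (Whᵀ * W)) * F = Fh := by
        rw [Matrix.mul_assoc, Matrix.mul_assoc, ← heq, ← Matrix.mul_assoc Whᵀ,
          ← Matrix.mul_assoc, Matrix.nonsing_inv_mul _ hGh, Matrix.one_mul]
      have hBF' : ((Wᵀ * W)⁻¹ * (Wᵀ * Wh)) * Fh = F := by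
        rw [Matrix.mul_assoc, Matrix.mul_assoc, heq, ← Matrix.mul_assoc Wᵀ,
          ← Matrix.mul_assoc, Matrix.nonsing_inv_mul _ hGW, Matrix.one_mul]
      set A := (Whᵀ * Wh)⁻¹ * (Whᵀ * W)
      set B := (Wᵀ * W)⁻¹ * (Wᵀ * Wh)
      have h1 : (B * A) * F = F := by rw [Matrix.mul_assoc, hAF', hBF']
      have h2 : (B * A) * (F * Fᵀ) = F * Fᵀ := by rw [← Matrix.mul_assoc, h1]
      have hBA : B * A = 1 := by
        calc B * A = (B * A) * ((F * Fᵀ) * (F * Fᵀ)⁻¹) := by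
              rw [Matrix.mul_nonsing_inv _ hG, Matrix.mul_one]
          _ = ((B * A) * (F * Fᵀ)) * (F * Fᵀ)⁻¹ := by simp only [Matrix.mul_assoc]
          _ = (F * Fᵀ) * (F * Fᵀ)⁻¹ := by rw [h2]
          _ = 1 := Matrix.mul_nonsing_inv _ hG
      exact mul_eq_one_comm.mpr hBA
  -- column sums of A are 1
  have hcolA : ∀ j, ∑ i, A i j = 1 := by
    intro j
    set v : Fin K → ℝ := fun j => (∑ i, A i j) - 1 with hvdef
    have hvF : v ᵥ* F = 0 := by
      funext n
      have h3 : (v ᵥ* F) n = ∑ k, v k * F k n := by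
        simp [Matrix.vecMul, dotProduct]
      rw [h3]
      have hexp : ∑ k, v k * F k n = (∑ k, (∑ i, A i k) * F k n) - ∑ k, F k n := by
        rw [← Finset.sum_sub_distrib]
        exact Finset.sum_congr rfl fun k _ => by rw [hvdef]; ring
      have hswap : ∑ k, (∑ i, A i k) * F k n = ∑ i, Fh i n := by
        calc ∑ k, (∑ i, A i k) * F k n = ∑ k, ∑ i, A i k * F k n :=
              Finset.sum_congr rfl fun k _ => Finset.sum_mul _ _ _
          _ = ∑ i, ∑ k, A i k * F k n := Finset.sum_comm
          _ = ∑ i, (A * F) i n := by simp [Matrix.mul_apply]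
          _ = ∑ i, Fh i n := by rw [hAF]
      rw [hexp, hswap, hFh1 n, hF1 n]
      simp
    have hv0 : v = 0 := by
      have h1 : v ᵥ* (F * Fᵀ) = 0 := by
        rw [← Matrix.vecMul_vecMul, hvF]
        funext j; simp [Matrix.vecMul]
      have h2 : v ᵥ* ((F * Fᵀ) * (F * Fᵀ)⁻¹) = 0 := by
        rw [← Matrix.vecMul_vecMul, h1]
        funext j; simp [Matrix.vecMul]
      rwa [Matrix.mul_nonsing_inv _ hG, Matrix.vecMul_one] at h2
    have h4 := congrFun hv0 j
    simp only [hvdef, Pi.zero_apply] at h4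
    linarith
  -- column sums of B are 1
  have hcolB : ∀ j, ∑ k, B k j = 1 := by
    intro j
    calc ∑ k, B k j = ∑ k, (∑ i, A i k) * B k j :=
          Finset.sum_congr rfl fun k _ => by rw [hcolA k, one_mul]
      _ = ∑ k, ∑ i, A i k * B k j := Finset.sum_congr rfl fun k _ => Finset.sum_mul _ _ _
      _ = ∑ i, ∑ k, A i k * B k j := Finset.sum_comm
      _ = ∑ i, (A * B) i j := by simp [Matrix.mul_apply]
      _ = ∑ i, (1 : Matrix (Fin K) (Fin K) ℝ) i j := by rw [hAB]
      _ = 1 := by simp [Matrix.one_apply]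
  -- rows of A lie in the dual of the SOC
  have hrowA : ∀ i, Real.sqrt (∑ k, (A i k) ^ 2) ≤ ∑ k, A i k := by
    intro i
    apply dual_socC
    intro x hx
    obtain ⟨θ, hθ, hxe⟩ := hFssc.1 hx
    rw [hxe]
    have h5 : ∑ k, A i k * (F.mulVec θ) k = ∑ n, (A * F) i n * θ n := by
      calc ∑ k, A i k * (F.mulVec θ) k
          = ∑ k, ∑ n, A i k * (F k n * θ n) := by
            simp [Matrix.mulVec, dotProduct, Finset.mul_sum]
        _ = ∑ n, ∑ k, A i k * (F k n * θ n) := Finset.sum_comm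
        _ = ∑ n, (A * F) i n * θ n := by
            refine Finset.sum_congr rfl fun n _ => ?_
            rw [Matrix.mul_apply, Finset.sum_mul]
            exact Finset.sum_congr rfl fun k _ => (mul_assoc _ _ _).symm
    rw [h5, hAF]
    exact Finset.sum_nonneg fun n _ => mul_nonneg (hFh0 i n) (hθ n)
  -- columns of B lie in the dual of the SOC
  have hcolBnorm : ∀ j, Real.sqrt (∑ k, (B k j) ^ 2) ≤ 1 := by
    intro j
    rw [← hcolB j]
    apply dual_socC
    intro x hx
    obtain ⟨θ, hθ, hxe⟩ := hWssc.1 hx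
    rw [hxe]
    have h5 : ∑ k, B k j * (Wᵀ.mulVec θ) k = ∑ l, (W * B) l j * θ l := by
      calc ∑ k, B k j * (Wᵀ.mulVec θ) k
          = ∑ k, ∑ l, B k j * (W l k * θ l) := by
            simp [Matrix.mulVec, dotProduct, Finset.mul_sum, Matrix.transpose_apply]
        _ = ∑ l, ∑ k, B k j * (W l k * θ l) := Finset.sum_comm
        _ = ∑ l, (W * B) l j * θ l := by
            refine Finset.sum_congr rfl fun l _ => ?_
            rw [Matrix.mul_apply, Finset.sum_mul]
            exact Finset.sum_congr rfl fun k _ => by ring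
    rw [h5, hWB]
    exact Finset.sum_nonneg fun l _ => mul_nonneg (hWh0 l j) (hθ l)
  -- scalar endgame: B = Aᵀ
  have hdiag : ∀ i, ∑ k, A i k * B k i = 1 := by
    intro i
    have h6 : (A * B) i i = 1 := by rw [hAB]; simp [Matrix.one_apply]
    rwa [Matrix.mul_apply] at h6
  have hsa : ∀ i, (0:ℝ) ≤ ∑ k, (A i k)^2 := fun i => Finset.sum_nonneg fun k _ => sq_nonneg _
  have hsb : ∀ i, (0:ℝ) ≤ ∑ k, (B k i)^2 := fun i => Finset.sum_nonneg fun k _ => sq_nonneg _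
  have hCS : ∀ i, 1 ≤ (∑ k, (A i k)^2) * (∑ k, (B k i)^2) := by
    intro i
    have h7 := Finset.sum_mul_sq_le_sq_mul_sq Finset.univ (fun k => A i k) (fun k => B k i)
    calc (1:ℝ) = (∑ k, A i k * B k i)^2 := by rw [hdiag i]; norm_num
      _ ≤ (∑ k, (A i k)^2) * (∑ k, (B k i)^2) := h7
  have hb_le : ∀ i, (∑ k, (B k i)^2) ≤ 1 := by
    intro i
    have h1 := hcolBnorm i
    nlinarith [Real.sq_sqrt (hsb i), Real.sqrt_nonneg (∑ k, (B k i)^2)]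
  have hssum : ∑ i, ∑ k, A i k = (K:ℝ) := by
    calc ∑ i, ∑ k, A i k = ∑ k, ∑ i, A i k := Finset.sum_comm
      _ = ∑ _k : Fin K, (1:ℝ) := Finset.sum_congr rfl fun k _ => hcolA k
      _ = K := by simp
  have hsge1 : ∀ i, 1 ≤ ∑ k, A i k := by
    intro i
    have ha1 : 1 ≤ ∑ k, (A i k)^2 := by nlinarith [hCS i, hb_le i, hsa i, hsb i]
    have h2 : (1:ℝ) ≤ Real.sqrt (∑ k, (A i k)^2) := by
      rw [show (1:ℝ) = Real.sqrt 1 by simp]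
      exact Real.sqrt_le_sqrt ha1
    exact le_trans h2 (hrowA i)
  have hseq : ∀ i, ∑ k, A i k = 1 := by
    intro i
    by_contra hne
    have hlt : 1 < ∑ k, A i k := lt_of_le_of_ne (hsge1 i) (Ne.symm hne)
    have h8 : (K:ℝ) < ∑ j, ∑ k, A j k := by
      calc (K:ℝ) = ∑ _j : Fin K, (1:ℝ) := by simp
        _ < ∑ j, ∑ k, A j k :=
          Finset.sum_lt_sum (fun j _ => hsge1 j) ⟨i, Finset.mem_univ i, hlt⟩
    rw [hssum] at h8
    exact lt_irrefl _ h8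
  have ha_eq : ∀ i, ∑ k, (A i k)^2 = 1 := by
    intro i
    have hle : Real.sqrt (∑ k, (A i k)^2) ≤ 1 := by rw [← hseq i]; exact hrowA i
    have h1 : ∑ k, (A i k)^2 ≤ 1 := by
      nlinarith [Real.sq_sqrt (hsa i), Real.sqrt_nonneg (∑ k, (A i k)^2)]
    have h2 : 1 ≤ ∑ k, (A i k)^2 := by nlinarith [hCS i, hb_le i, hsa i, hsb i]
    linarith
  have hb_eq : ∀ i, ∑ k, (B k i)^2 = 1 := by
    intro i
    have h9 := hCS i
    rw [ha_eq i, one_mul] at h9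
    linarith [hb_le i]
  have hBAt : B = Aᵀ := by
    ext k i
    show B k i = A i k
    have hzero : ∑ j, (A i j - B j i)^2 = 0 := by
      have h10 : ∑ j, (A i j - B j i)^2
          = (∑ j, (A i j)^2) - 2 * (∑ j, A i j * B j i) + (∑ j, (B j i)^2) := by
        calc ∑ j, (A i j - B j i)^2
            = ∑ j, ((A i j)^2 - 2*(A i j * B j i) + (B j i)^2) :=
              Finset.sum_congr rfl fun j _ => by ring
          _ = _ := by rw [Finset.sum_add_distrib, Finset.sum_sub_distrib, Finset.mul_sum]
      rw [h10, ha_eq i, hdiag i, hb_eq i]; ring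
    have h11 := (Finset.sum_eq_zero_iff_of_nonneg
      (fun j _ => sq_nonneg (A i j - B j i))).mp hzero k (Finset.mem_univ k)
    have h12 := pow_eq_zero_iff (n := 2) (by norm_num) |>.mp h11
    linarith
  -- Aᵀ is orthogonal
  have hAAt : A * Aᵀ = 1 := hBAt ▸ hAB
  have hAtA : Aᵀ * A = 1 := mul_eq_one_comm.mp hAAt
  -- cone(F) ⊆ cone(Aᵀ)
  have hsub : coneOf F ⊆ coneOf Aᵀ := by
    intro x hx
    obtain ⟨θ, hθ, hxe⟩ := hx
    refine ⟨Fh.mulVec θ, ?_, ?_⟩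
    · intro k
      rw [Matrix.mulVec]
      exact Finset.sum_nonneg fun n _ => mul_nonneg (hFh0 k n) (hθ n)
    · rw [← hAF, Matrix.mulVec_mulVec, ← Matrix.mul_assoc, hAtA, Matrix.one_mul, hxe]
  have hperm : IsPermMatrix Aᵀ := by
    by_contra hnp
    exact hFssc.2 Aᵀ (by rw [Matrix.transpose_transpose, hAAt]) hnp hsub
  refine ⟨Aᵀ, hperm, ?_, ?_⟩
  · rw [← hWB, hBAt]
  · rw [Matrix.transpose_transpose, hAF]
end

section
/- Let ρ > 0, let W♮ ∈ ℝ^{L×K} be entrywise nonnegative with every column summing to ρ, rank(W♮) = K, and (W♮)^T satisfying the SSC, and let F♮ ∈ ℝ^{K×N} with rank(F♮) = K. Set P = W♮·F♮. Call a pair (W,F) feasible if W ∈ ℝ^{L×K} is entrywise nonnegative with every column summing to ρ, F ∈ ℝ^{K×N}, and W·F = P. If (W*,F*) is feasible and det((W*)^T·W*) ≥ det(W^T·W) for every feasible (W,F), then there exists a permutation matrix Π ∈ ℝ^{K×K} such that W* = W♮·Π and F* = Π^T·F♮. -/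
/-!
Since `W♮` and `F♮` have full rank, any feasible `W⋆` factors as `W♮ A`. The columns of `A` sum
to one, and nonnegativity of `W♮ A` puts them in the dual cone of `cone(W♮ᵀ) ⊇ C`; a vector of
`C*` with coordinate sum one has norm at most one. Optimality gives
`det (W⋆ᵀ W⋆) ≥ det (W♮ᵀ W♮)`, i.e. `|det A| ≥ 1`; together with the column bounds, AM–GM on
the eigenvalues of `AᵀA` forces `AᵀA = 1`. Then
`cone(W♮ᵀ) ⊆ cone(A)`, and the SSC makes the orthogonal matrix `A` a permutation.
-/

open Matrix BigOperators

lemma eq_one_of_one_le_prod_of_sum_le_card {ι : Type*} [Fintype ι] {x : ι → ℝ}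
    (hx : ∀ i, 0 ≤ x i) (hprod : 1 ≤ ∏ i, x i) (hsum : ∑ i, x i ≤ Fintype.card ι) (i : ι) :
    x i = 1 := by
  by_contra hi
  have hpos : ∀ j, 0 < x j := fun j => (hx j).lt_of_ne fun h => by
    rw [Finset.prod_eq_zero (Finset.mem_univ j) h.symm] at hprod
    linarith
  -- `x ≤ exp (x - 1)`, with equality only at `x = 1`
  have hlt : ∏ j, x j < Real.exp (∑ j, (x j - 1)) := by
    rw [Real.exp_sum]
    refine Finset.prod_lt_prod (fun j _ => hpos j) (fun j _ => ?_) ⟨i, Finset.mem_univ i, ?_⟩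
    · linarith [Real.add_one_le_exp (x j - 1)]
    · linarith [Real.add_one_lt_exp (x := x i - 1) (sub_ne_zero.2 hi)]
  have hle : Real.exp (∑ j, (x j - 1)) ≤ 1 := by
    rw [Real.exp_le_one_iff, Finset.sum_sub_distrib]
    simpa using hsum
  linarith

namespace Matrix

variable {l m n 𝕜 : Type*} [Fintype m] [Fintype n] [Field 𝕜]

lemma exists_mul_eq_one_of_rank_eq_card_height [DecidableEq m] {F : Matrix m n 𝕜}
    (h : F.rank = Fintype.card m) : ∃ G : Matrix n m 𝕜, F * G = 1 := by
  refine mulVec_surjective_iff_exists_right_inverse.1 ?_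
  rw [← coe_mulVecLin, ← LinearMap.range_eq_top]
  apply Submodule.eq_top_of_finrank_eq
  simpa [rank] using h

lemma exists_mul_eq_one_of_rank_eq_card_width [DecidableEq n] {W : Matrix m n 𝕜}
    (h : W.rank = Fintype.card n) : ∃ V : Matrix n m 𝕜, V * W = 1 := by
  obtain ⟨G, hG⟩ := exists_mul_eq_one_of_rank_eq_card_height (F := Wᵀ) (by rwa [rank_transpose])
  exact ⟨Gᵀ, by simpa using congrArg transpose hG⟩

lemma exists_eq_mul_of_mul_eq [Fintype l] [DecidableEq m] {W Wn : Matrix l m 𝕜}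
    {F Fn : Matrix m n 𝕜} (hWn : Wn.rank = Fintype.card m) (hFn : Fn.rank = Fintype.card m)
    (h : W * F = Wn * Fn) : ∃ A : Matrix m m 𝕜, W = Wn * A ∧ A * F = Fn := by
  obtain ⟨V, hV⟩ := exists_mul_eq_one_of_rank_eq_card_width hWn
  have hF : F.rank = Fintype.card m := by
    refine le_antisymm F.rank_le_card_height ?_
    calc Fintype.card m = (V * (W * F)).rank := by
          rw [h, ← Matrix.mul_assoc, hV, Matrix.one_mul, hFn]
      _ ≤ (W * F).rank := rank_mul_le_right _ _
      _ ≤ F.rank := rank_mul_le_right _ _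
  obtain ⟨G, hG⟩ := exists_mul_eq_one_of_rank_eq_card_height hF
  have hW : W = Wn * (Fn * G) := by
    rw [← Matrix.mul_assoc, ← h, Matrix.mul_assoc, hG, Matrix.mul_one]
  refine ⟨Fn * G, hW, ?_⟩
  calc Fn * G * F = V * (W * F) := by
        rw [hW, ← Matrix.mul_assoc, ← Matrix.mul_assoc, hV, Matrix.one_mul]
    _ = Fn := by rw [h, ← Matrix.mul_assoc, hV, Matrix.one_mul]

lemma det_transpose_mul_self_pos [DecidableEq n] {W : Matrix m n ℝ}
    (h : W.rank = Fintype.card n) : 0 < (Wᵀ * W).det := by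
  obtain ⟨G, hG⟩ := exists_mul_eq_one_of_rank_eq_card_height (F := Wᵀ * W)
    (by rw [rank_transpose_mul_self, h])
  refine lt_of_le_of_ne ?_ (isUnit_det_of_right_inverse hG).ne_zero.symm
  simpa using (posSemidef_conjTranspose_mul_self W).det_nonneg

lemma det_transpose_mul_self_mul {R : Type*} [CommRing R] [Fintype l] [DecidableEq n]
    (W : Matrix l n R) (A : Matrix n n R) :
    ((W * A)ᵀ * (W * A)).det = A.det ^ 2 * (Wᵀ * W).det := by
  rw [transpose_mul, Matrix.mul_assoc, ← Matrix.mul_assoc Wᵀ, det_mul, det_mul, det_transpose]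
  ring

lemma sum_mul_apply_of_sum_eq {R : Type*} [CommSemiring R]
    {W : Matrix n m R} {ρ : R} (hW : ∀ j, ∑ i, W i j = ρ) (A : Matrix m l R) (k : l) :
    ∑ i, (W * A) i k = ρ * ∑ j, A j k := by
  simp only [mul_apply, Finset.mul_sum]
  rw [Finset.sum_comm]
  exact Finset.sum_congr rfl fun j _ => by rw [← Finset.sum_mul, hW j]

lemma PosSemidef.eq_one_of_one_le_det_of_trace_le [DecidableEq n]
    {M : Matrix n n ℝ} (hM : M.PosSemidef) (hdet : 1 ≤ M.det) (htr : M.trace ≤ Fintype.card n) :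
    M = 1 := by
  have hev : ∀ i, hM.1.eigenvalues i = 1 :=
    eq_one_of_one_le_prod_of_sum_le_card hM.eigenvalues_nonneg
      (by simpa [hM.1.det_eq_prod_eigenvalues] using hdet)
      (by simpa [hM.1.trace_eq_sum_eigenvalues] using htr)
  have hdiag : diagonal (RCLike.ofReal ∘ hM.1.eigenvalues) = (1 : Matrix n n ℝ) := by
    ext i j
    simp [diagonal_apply, one_apply, hev]
  have hspec := hM.1.spectral_theorem
  rwa [hdiag, map_one] at hspec

lemma transpose_mul_self_eq_one_of_one_le_det_sq [DecidableEq n]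
    {A : Matrix n n ℝ} (hcol : ∀ k, ∑ j, A j k ^ 2 ≤ 1) (hdet : 1 ≤ A.det ^ 2) : Aᵀ * A = 1 := by
  have hpsd : (Aᵀ * A).PosSemidef := by simpa using posSemidef_conjTranspose_mul_self A
  refine hpsd.eq_one_of_one_le_det_of_trace_le (by rwa [det_mul, det_transpose, ← sq]) ?_
  calc (Aᵀ * A).trace = ∑ k, ∑ j, A j k ^ 2 := by simp [trace, mul_apply, sq]
    _ ≤ ∑ _k : n, 1 := Finset.sum_le_sum fun k _ => hcol k
    _ = Fintype.card n := by simp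

end Matrix

section Cones

variable {K : ℕ} {J : Type*} [Fintype J]

lemma mulVec_transpose_nonneg_of_mem_coneOf {W : Matrix J (Fin K) ℝ} {A : Matrix (Fin K) (Fin K) ℝ}
    (hWA : ∀ i k, 0 ≤ (W * A) i k) {x : Fin K → ℝ} (hx : x ∈ coneOf Wᵀ) (k : Fin K) :
    0 ≤ (Aᵀ *ᵥ x) k := by
  obtain ⟨θ, hθ, rfl⟩ := hx
  rw [mulVec_mulVec, ← transpose_mul]
  exact Finset.sum_nonneg fun i _ => mul_nonneg (hWA i k) (hθ i)

lemma coneOf_transpose_subset_coneOf {W : Matrix J (Fin K) ℝ} {A : Matrix (Fin K) (Fin K) ℝ}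
    (hA : Aᵀ * A = 1) (hWA : ∀ i k, 0 ≤ (W * A) i k) : coneOf Wᵀ ⊆ coneOf A := fun x hx =>
  ⟨Aᵀ *ᵥ x, mulVec_transpose_nonneg_of_mem_coneOf hWA hx,
    by rw [mulVec_mulVec, mul_eq_one_comm.1 hA, one_mulVec]⟩

end Cones

lemma sum_sq_le_one_of_forall_mem_socC_dotProduct_nonneg {K : ℕ} {y : Fin K → ℝ}
    (hsum : ∑ j, y j = 1) (hdual : ∀ x ∈ socC K, 0 ≤ y ⬝ᵥ x) : ∑ j, y j ^ 2 ≤ 1 := by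
  by_contra! hQ
  set Q := ∑ j, y j ^ 2
  have hK : (1 : ℝ) ≤ K := by
    rcases K with _ | K
    · simp at hsum
    · simp
  -- the test point `s • 1 - y` with `s` strictly between `1` and `Q` pairs negatively with `y`
  set s := (Q + 1) / 2 with hs
  set x : Fin K → ℝ := fun j => s - y j
  have hxsum : ∑ j, x j = K * s - 1 := by simp [x, Finset.sum_sub_distrib, hsum]
  have hxsq : ∑ j, x j ^ 2 = K * s ^ 2 - 2 * s + Q := by
    simp [x, sub_sq, Finset.sum_add_distrib, Finset.sum_sub_distrib, ← Finset.mul_sum, hsum, Q]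
  have hmem : x ∈ socC K := by
    change √((K : ℝ) - 1) * l2norm x ≤ ∑ j, x j
    rw [l2norm, hxsq, hxsum, ← Real.sqrt_mul (by linarith), Real.sqrt_le_left (by nlinarith)]
    have hgap : (K * s - 1) ^ 2 - (K - 1) * (K * s ^ 2 - 2 * s + Q) = K * (Q - 1) ^ 2 / 4 := by
      rw [hs]
      ring
    nlinarith [sq_nonneg (Q - 1)]
  have hyx : y ⬝ᵥ x = s - Q := by
    simp [dotProduct, x, mul_sub, Finset.sum_sub_distrib, ← Finset.sum_mul, hsum, sq, Q]
  have hpair := hdual x hmem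
  rw [hyx] at hpair
  linarith

theorem stmt8 {L N K : ℕ} (ρ : ℝ) (hρ : 0 < ρ)
    (Wn : Matrix (Fin L) (Fin K) ℝ) (Fn : Matrix (Fin K) (Fin N) ℝ)
    (hWn0 : ∀ i k, 0 ≤ Wn i k) (hWn1 : ∀ k, ∑ i, Wn i k = ρ)
    (hWnrank : Wn.rank = K) (hWnssc : SSC Wnᵀ)
    (hFnrank : Fn.rank = K)
    (Wstar : Matrix (Fin L) (Fin K) ℝ) (Fstar : Matrix (Fin K) (Fin N) ℝ)
    (hWstar0 : ∀ i k, 0 ≤ Wstar i k) (hWstar1 : ∀ k, ∑ i, Wstar i k = ρ)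
    (hfeas : Wstar * Fstar = Wn * Fn)
    (hopt : ∀ (W : Matrix (Fin L) (Fin K) ℝ) (F : Matrix (Fin K) (Fin N) ℝ),
      (∀ i k, 0 ≤ W i k) → (∀ k, ∑ i, W i k = ρ) → W * F = Wn * Fn →
      (Wᵀ * W).det ≤ (Wstarᵀ * Wstar).det) :
    ∃ Pm : Matrix (Fin K) (Fin K) ℝ,
      IsPermMatrix Pm ∧ Wstar = Wn * Pm ∧ Fstar = Pmᵀ * Fn := by
  have hWn : Wn.rank = Fintype.card (Fin K) := by rw [hWnrank, Fintype.card_fin]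
  have hFn : Fn.rank = Fintype.card (Fin K) := by rw [hFnrank, Fintype.card_fin]
  obtain ⟨A, rfl, hAF⟩ := exists_eq_mul_of_mul_eq hWn hFn hfeas
  have hA1 : ∀ k, ∑ j, A j k = 1 := fun k => by
    have hk := hWstar1 k
    rw [sum_mul_apply_of_sum_eq hWn1] at hk
    exact (mul_eq_left₀ hρ.ne').1 hk
  have hcol : ∀ k, ∑ j, A j k ^ 2 ≤ 1 := fun k =>
    sum_sq_le_one_of_forall_mem_socC_dotProduct_nonneg (hA1 k) fun _ hx =>
      mulVec_transpose_nonneg_of_mem_coneOf hWstar0 (hWnssc.1 hx) k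
  have hdet : 1 ≤ A.det ^ 2 := by
    have hle := hopt Wn Fn hWn0 hWn1 rfl
    rw [det_transpose_mul_self_mul] at hle
    nlinarith [det_transpose_mul_self_pos hWn]
  have hA : Aᵀ * A = 1 := transpose_mul_self_eq_one_of_one_le_det_sq hcol hdet
  have hperm : IsPermMatrix A := by
    by_contra hnot
    exact hWnssc.2 A hA hnot (coneOf_transpose_subset_coneOf hA hWstar0)
  refine ⟨A, hperm, rfl, ?_⟩
  rw [← hAF, ← Matrix.mul_assoc, hA, Matrix.one_mul]
end

section
/- Let ρ > 0 and let W ∈ ℝ^{I×K} be entrywise nonnegative with every column summing to ρ, rank(W) = K, and W^T satisfying the SSC. Let Q ∈ ℝ^{K×K} be invertible, not a permutation matrix, and such that W·Q is entrywise nonnegative with every column summing to ρ. Then det((W·Q)^T·(W·Q)) < det(W^T·W). -/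
/-!
Since `C ⊆ cone(Wᵀ)` and `W Q ≥ 0`, every column `q` of `Q` lies in the dual cone of `C`, which
is `{q : ‖q‖₂ ≤ ∑ q}`; the column sums force `∑ q = 1`, so `‖q‖₂ ≤ 1`. Hence `QᵀQ` is positive
semidefinite with trace at most `K`, and AM–GM on its eigenvalues gives `det(Q)² ≤ 1`, with
equality only if `QᵀQ = 1`. In that case `Wᵀ = Q (W Q)ᵀ` puts `cone(Wᵀ)` inside `cone(Q)` for an
orthogonal non-permutation `Q`, which the SSC forbids. So `det(Q)² < 1`, and
`det((WQ)ᵀ WQ) = det(Q)² det(WᵀW)` with `det(WᵀW) > 0` by the rank assumption.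
-/

open Matrix BigOperators

lemma mem_socC_of_sq_le {K : ℕ} {x : Fin K → ℝ} (hsum : 0 ≤ ∑ i, x i)
    (hsq : ((K : ℝ) - 1) * ∑ i, x i ^ 2 ≤ (∑ i, x i) ^ 2) : x ∈ socC K :=
  calc Real.sqrt ((K : ℝ) - 1) * Real.sqrt (∑ i, x i ^ 2)
      = Real.sqrt (((K : ℝ) - 1) * ∑ i, x i ^ 2) :=
        (Real.sqrt_mul' _ (Finset.sum_nonneg fun i _ => sq_nonneg (x i))).symm
    _ ≤ Real.sqrt ((∑ i, x i) ^ 2) := Real.sqrt_le_sqrt hsq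
    _ = ∑ i, x i := Real.sqrt_sq hsum

lemma sum_sq_le_sq_sum_of_forall_mem_socC {K : ℕ} {q : Fin K → ℝ}
    (hq : ∀ x ∈ socC K, 0 ≤ x ⬝ᵥ q) : ∑ j, q j ^ 2 ≤ (∑ j, q j) ^ 2 := by
  rcases K.eq_zero_or_pos with rfl | hK
  · simp
  have hK1 : (1 : ℝ) ≤ K := by exact_mod_cast hK
  set s := ∑ j, q j
  set S := ∑ j, q j ^ 2
  set D := K * S - s ^ 2
  have hD : 0 ≤ D := by
    simpa [D, s, S] using sub_nonneg.mpr (sq_sum_le_card_mul_sum_sq (s := Finset.univ) (f := q))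
  set u := Real.sqrt (((K : ℝ) - 1) * D)
  have hu : 0 ≤ u := Real.sqrt_nonneg _
  have hu2 : u ^ 2 = ((K : ℝ) - 1) * D := Real.sq_sqrt (mul_nonneg (by linarith) hD)
  -- `x` lies on the boundary of `C`: `u` is chosen so that `(K - 1) ∑ x² = (∑ x)²`
  set x : Fin K → ℝ := fun j => (s + u) - K * q j
  have hx_sum : ∑ j, x j = K * u := by
    simp [x, Finset.sum_sub_distrib, ← Finset.mul_sum, s]
  have hx_sq : ∑ j, x j ^ 2 = K * (u ^ 2 + D) := by
    simp only [x, sub_sq, Finset.sum_add_distrib, Finset.sum_sub_distrib, mul_pow,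
      ← Finset.mul_sum, Finset.sum_const, Finset.card_univ, Fintype.card_fin, nsmul_eq_mul]
    simp only [mul_assoc]
    ring
  have hx_dot : x ⬝ᵥ q = u * s - D := by
    simp only [x, dotProduct, sub_mul, Finset.sum_sub_distrib]
    simp only [mul_assoc, ← Finset.mul_sum, ← sq]
    ring
  have hxC : x ∈ socC K := by
    apply mem_socC_of_sq_le
    · rw [hx_sum]; positivity
    · rw [hx_sum, hx_sq]
      nlinarith
  have hDus : D ≤ u * s := by linarith [hq x hxC]
  have hDle : D ≤ ((K : ℝ) - 1) * s ^ 2 := by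
    by_contra! h
    have hDpos : 0 < D := lt_of_le_of_lt (by nlinarith) h
    have hsq : D * D ≤ (u * s) * (u * s) := mul_le_mul hDus hDus hD (hD.trans hDus)
    have hus : (u * s) * (u * s) = D * (((K : ℝ) - 1) * s ^ 2) := by
      linear_combination s ^ 2 * hu2
    nlinarith [mul_lt_mul_of_pos_left h hDpos]
  nlinarith

lemma dotProduct_nonneg_of_mem_coneOf {K : ℕ} {J : Type*} [Fintype J]
    {H : Matrix (Fin K) J ℝ} {x q : Fin K → ℝ} (hx : x ∈ coneOf H) (hq : ∀ j, 0 ≤ (q ᵥ* H) j) :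
    0 ≤ x ⬝ᵥ q := by
  obtain ⟨θ, hθ, rfl⟩ := hx
  rw [dotProduct_comm, dotProduct_mulVec]
  exact Finset.sum_nonneg fun j _ => mul_nonneg (hq j) (hθ j)

lemma coneOf_mul_subset {K : ℕ} {J J' : Type*} [Fintype J] [Fintype J']
    (Q : Matrix (Fin K) J ℝ) {M : Matrix J J' ℝ} (hM : ∀ i j, 0 ≤ M i j) :
    coneOf (Q * M) ⊆ coneOf Q := by
  rintro _ ⟨θ, hθ, rfl⟩
  exact ⟨M *ᵥ θ, fun i => Finset.sum_nonneg fun j _ => mul_nonneg (hM i j) (hθ j),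
    (mulVec_mulVec θ Q M).symm⟩

lemma eq_one_of_sum_le_card_of_one_le_prod {ι : Type*} [Fintype ι] {μ : ι → ℝ}
    (hμ : ∀ i, 0 ≤ μ i) (hsum : ∑ i, μ i ≤ Fintype.card ι) (hprod : 1 ≤ ∏ i, μ i) (i : ι) :
    μ i = 1 := by
  by_contra hne
  have hpos : ∀ j, 0 < μ j := fun j => (hμ j).lt_of_ne' fun hj => by
    rw [Finset.prod_eq_zero (Finset.mem_univ j) hj] at hprod
    linarith
  -- `μ ≤ exp (μ - 1)`, strictly unless `μ = 1`
  have hlt : ∏ j, μ j < ∏ j, Real.exp (μ j - 1) :=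
    Finset.prod_lt_prod (fun j _ => hpos j)
      (fun j _ => by linarith [Real.add_one_le_exp (μ j - 1)])
      ⟨i, Finset.mem_univ i, by linarith [Real.add_one_lt_exp (sub_ne_zero.mpr hne)]⟩
  have hexp : ∏ j, Real.exp (μ j - 1) ≤ 1 := by
    rw [← Real.exp_sum, Real.exp_le_one_iff, Finset.sum_sub_distrib]
    simpa using hsum
  linarith

lemma Matrix.PosSemidef.eq_one_of_trace_le_of_one_le_det {n : Type*} [Fintype n]
    [DecidableEq n] {S : Matrix n n ℝ} (hS : S.PosSemidef) (htr : S.trace ≤ Fintype.card n)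
    (hdet : 1 ≤ S.det) : S = 1 := by
  have hμ : ∀ i, hS.1.eigenvalues i = 1 :=
    eq_one_of_sum_le_card_of_one_le_prod hS.eigenvalues_nonneg
      (by simpa [hS.1.trace_eq_sum_eigenvalues] using htr)
      (by simpa [hS.1.det_eq_prod_eigenvalues] using hdet)
  have hdiag : diagonal (RCLike.ofReal ∘ hS.1.eigenvalues) = (1 : Matrix n n ℝ) := by
    ext i j
    simp [diagonal_apply, one_apply, hμ]
  rw [hS.1.spectral_theorem, hdiag, map_one]

lemma Matrix.transpose_mul_self_eq_one_of_sum_sq_le_one {n : Type*} [Fintype n] [DecidableEq n]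
    {Q : Matrix n n ℝ} (hcol : ∀ k, ∑ j, Q j k ^ 2 ≤ 1) (hdet : 1 ≤ Q.det ^ 2) :
    Qᵀ * Q = 1 := by
  have hpsd : (Qᵀ * Q).PosSemidef := by
    simpa using posSemidef_conjTranspose_mul_self Q
  refine hpsd.eq_one_of_trace_le_of_one_le_det ?_ (by rwa [det_mul, det_transpose, ← sq])
  calc (Qᵀ * Q).trace = ∑ k, ∑ j, Q j k ^ 2 := by simp [trace, mul_apply, sq]
    _ ≤ ∑ _k : n, (1 : ℝ) := Finset.sum_le_sum fun k _ => hcol k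
    _ = Fintype.card n := by simp

lemma sum_col_eq_one_of_sum_col_mul {R m n p : Type*} [Field R] [Fintype m] [Fintype n]
    {ρ : R} (hρ : ρ ≠ 0) {W : Matrix m n R} {Q : Matrix n p R}
    (hW : ∀ k, ∑ i, W i k = ρ) (hWQ : ∀ k, ∑ i, (W * Q) i k = ρ) (k : p) :
    ∑ j, Q j k = 1 := by
  refine mul_left_cancel₀ hρ ?_
  calc ρ * ∑ j, Q j k = ∑ j, ∑ i, W i j * Q j k := by
        simp only [Finset.mul_sum, ← Finset.sum_mul, hW]
    _ = ∑ i, (W * Q) i k := by rw [Finset.sum_comm]; simp only [mul_apply]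
    _ = ρ * 1 := by rw [hWQ, mul_one]

lemma Matrix.det_transpose_mul_self_mul_s11 {m n : Type*} [Fintype m] [Fintype n] [DecidableEq n]
    {R : Type*} [CommRing R] (W : Matrix m n R) (Q : Matrix n n R) :
    ((W * Q)ᵀ * (W * Q)).det = Q.det ^ 2 * (Wᵀ * W).det := by
  rw [transpose_mul, Matrix.mul_assoc, ← Matrix.mul_assoc Wᵀ, det_mul, det_mul,
    det_transpose]
  ring

lemma Matrix.mulVec_injective_of_rank_eq_card {R m n : Type*} [Field R] [Fintype m] [Fintype n]
    (W : Matrix m n R) (h : W.rank = Fintype.card n) : Function.Injective W.mulVec := by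
  have hdim := LinearMap.finrank_range_add_finrank_ker W.mulVecLin
  rw [← Matrix.rank, h, Module.finrank_fintype_fun_eq_card] at hdim
  have hker : LinearMap.ker W.mulVecLin = ⊥ :=
    Submodule.finrank_eq_zero.mp (by omega)
  exact LinearMap.ker_eq_bot.mp hker

lemma Matrix.det_transpose_mul_self_pos_s11 {m n : Type*} [Fintype m] [Fintype n] [DecidableEq n]
    (W : Matrix m n ℝ) (h : W.rank = Fintype.card n) : 0 < (Wᵀ * W).det :=
  (PosDef.conjTranspose_mul_self W (mulVec_injective_of_rank_eq_card W h)).det_pos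

theorem stmt11_general {I K : ℕ} (ρ : ℝ) (hρ : 0 < ρ)
    (W : Matrix (Fin I) (Fin K) ℝ)
    (hW1 : ∀ k, ∑ i, W i k = ρ)
    (hWrank : W.rank = K) (hWssc : SSC Wᵀ)
    (Q : Matrix (Fin K) (Fin K) ℝ) (hQnp : ¬ IsPermMatrix Q)
    (hWQ0 : ∀ i k, 0 ≤ (W * Q) i k) (hWQ1 : ∀ k, ∑ i, (W * Q) i k = ρ) :
    ((W * Q)ᵀ * (W * Q)).det < (Wᵀ * W).det := by
  have hQnorm : ∀ k, ∑ j, Q j k ^ 2 ≤ 1 := fun k => by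
    have hdual : ∀ x ∈ socC K, 0 ≤ x ⬝ᵥ Qᵀ k := fun x hx =>
      dotProduct_nonneg_of_mem_coneOf (hWssc.1 hx) fun i => by
        simpa [vecMul_transpose, mulVec, dotProduct, mul_apply] using hWQ0 i k
    simpa [sum_col_eq_one_of_sum_col_mul hρ.ne' hW1 hWQ1 k] using
      sum_sq_le_sq_sum_of_forall_mem_socC hdual
  have hdetQ : Q.det ^ 2 < 1 := by
    by_contra! hdet
    have hQQ : Qᵀ * Q = 1 := transpose_mul_self_eq_one_of_sum_sq_le_one hQnorm hdet
    refine hWssc.2 Q hQQ hQnp ?_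
    have hWt : Wᵀ = Q * (W * Q)ᵀ := by
      rw [transpose_mul, ← Matrix.mul_assoc, mul_eq_one_comm.mp hQQ, Matrix.one_mul]
    rw [hWt]
    exact coneOf_mul_subset Q fun k i => hWQ0 i k
  rw [det_transpose_mul_self_mul_s11]
  exact mul_lt_of_lt_one_left (det_transpose_mul_self_pos_s11 W (by rw [hWrank, Fintype.card_fin])) hdetQ

theorem stmt11 {I K : ℕ} (ρ : ℝ) (hρ : 0 < ρ)
    (W : Matrix (Fin I) (Fin K) ℝ)
    (hW0 : ∀ i k, 0 ≤ W i k) (hW1 : ∀ k, ∑ i, W i k = ρ)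
    (hWrank : W.rank = K) (hWssc : SSC Wᵀ)
    (Q : Matrix (Fin K) (Fin K) ℝ) (hQinv : Q.det ≠ 0) (hQnp : ¬ IsPermMatrix Q)
    (hWQ0 : ∀ i k, 0 ≤ (W * Q) i k) (hWQ1 : ∀ k, ∑ i, (W * Q) i k = ρ) :
    ((W * Q)ᵀ * (W * Q)).det < (Wᵀ * W).det :=
  stmt11_general ρ hρ W hW1 hWrank hWssc Q hQnp hWQ0 hWQ1
end
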